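/- arXiv:2003.03420 — 3 statements merged into one kernel-verified Lean document; each statement's English description precedes it below -/
import Mathlib

section
/- The set {α ∈ ℝ : there exists z ∈ ℂ with |z| = 1 and p(z) + α·q(z) = 0} is finite. -/
/-!
On the unit circle `z⁻¹ = conj z`, so for real `p`, `q` and `n = deg p` the reflection
`fᴿ = reflect n f` satisfies `fᴿ(z) = zⁿ · conj (f z)`. Hence if `p z = -α q z` with `α` real,
then `z` is a root of `R = p · qᴿ - pᴿ · q`. This `R` is nonzero: otherwise `p ∣ pᴿ · q`, and `p`,
`pᴿ` are coprime because the roots of `p` lie inside the unit disk and those of `pᴿ` outside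
its closure, so `p ∣ q`, against `deg q < deg p`. Since `q z ≠ 0`, `α = -p z / q z` is determined
by `z`, which ranges over the finitely many roots of `R`.
-/

open Polynomial ComplexConjugate

namespace Polynomial

theorem aeval_reflect_of_ne_zero {R K : Type*} [CommSemiring R] [Field K] [Algebra R K]
    {f : R[X]} {N : ℕ} (hf : f.natDegree ≤ N) {x : K} (hx : x ≠ 0) :
    aeval x (reflect N f) = x ^ N * aeval x⁻¹ f := by
  have : Invertible x⁻¹ := invertibleOfNonzero (inv_ne_zero hx)
  have h := eval₂_reflect_mul_pow (algebraMap R K) x⁻¹ N f hf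
  rw [invOf_eq_inv, inv_inv] at h
  rw [aeval_def, aeval_def, ← h, inv_pow, mul_left_comm, mul_inv_cancel₀ (pow_ne_zero N hx),
    mul_one]

theorem aeval_reflect_of_norm_eq_one {f : ℝ[X]} {N : ℕ} (hf : f.natDegree ≤ N) {z : ℂ}
    (hz : ‖z‖ = 1) : aeval z (reflect N f) = z ^ N * conj (aeval z f) := by
  rw [aeval_reflect_of_ne_zero hf (norm_ne_zero_iff.mp (hz ▸ one_ne_zero)),
    Complex.inv_eq_conj hz, aeval_conj]

theorem aeval_reflect_natDegree_ne_zero {p : ℝ[X]} (hp : p ≠ 0)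
    (hroots : ∀ z : ℂ, aeval z p = 0 → ‖z‖ < 1) {w : ℂ} (hw : ‖w‖ ≤ 1) :
    aeval w (reflect p.natDegree p) ≠ 0 := by
  rcases eq_or_ne w 0 with rfl | hw0
  · change aeval 0 (reverse p) ≠ 0
    simpa [← coeff_zero_eq_aeval_zero', coeff_zero_reverse] using hp
  · rw [aeval_reflect_of_ne_zero le_rfl hw0]
    refine mul_ne_zero (pow_ne_zero _ hw0) fun h => ?_
    have := hroots _ h
    rw [norm_inv, inv_lt_one₀ (norm_pos_iff.mpr hw0)] at this
    linarith

theorem isCoprime_reflect_natDegree {p : ℝ[X]} (hp : p ≠ 0)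
    (hroots : ∀ z : ℂ, aeval z p = 0 → ‖z‖ < 1) : IsCoprime p (reflect p.natDegree p) := by
  refine (isCoprime_iff_aeval_ne_zero_of_isAlgClosed ℝ ℂ _ _).2 fun z => ?_
  rcases lt_or_ge ‖z‖ 1 with hz | hz
  · exact Or.inr (aeval_reflect_natDegree_ne_zero hp hroots hz.le)
  · exact Or.inl fun h => (hroots z h).not_ge hz

theorem mul_reflect_sub_reflect_mul_ne_zero {p q : ℝ[X]}
    (hroots : ∀ z : ℂ, aeval z p = 0 → ‖z‖ < 1) (hq : q ≠ 0) (hdeg : q.degree < p.degree) :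
    p * reflect p.natDegree q - reflect p.natDegree p * q ≠ 0 := by
  intro h
  have hdvd : p ∣ reflect p.natDegree p * q := ⟨reflect p.natDegree q, (sub_eq_zero.mp h).symm⟩
  have hpq : p ∣ q :=
    (isCoprime_reflect_natDegree (ne_zero_of_degree_gt hdeg) hroots).dvd_of_dvd_mul_left hdvd
  exact (degree_le_of_dvd hpq hq).not_gt hdeg

theorem aeval_mul_reflect_sub_reflect_mul_eq_zero {p q : ℝ[X]} {N : ℕ} (hp : p.natDegree ≤ N)
    (hq : q.natDegree ≤ N) {z : ℂ} (hz : ‖z‖ = 1) {α : ℝ}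
    (hα : aeval z p + (α : ℂ) * aeval z q = 0) :
    aeval z (p * reflect N q - reflect N p * q) = 0 := by
  have hpz : aeval z p = -α * aeval z q := by linear_combination hα
  simp only [map_sub, map_mul, aeval_reflect_of_norm_eq_one hp hz,
    aeval_reflect_of_norm_eq_one hq hz, hpz, map_neg, Complex.conj_ofReal]
  ring

end Polynomial

theorem stmt3_general (p q : ℝ[X])
    (hroots : ∀ z : ℂ, (p.map (algebraMap ℝ ℂ)).IsRoot z → ‖z‖ < 1)
    (hdeg : q.degree < p.degree) :
    {α : ℝ | ∃ z : ℂ, ‖z‖ = 1 ∧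
      Polynomial.aeval z p + (α : ℂ) * Polynomial.aeval z q = 0}.Finite := by
  replace hroots : ∀ z : ℂ, aeval z p = 0 → ‖z‖ < 1 := fun z h =>
    hroots z (by rwa [IsRoot, eval_map_algebraMap])
  have hp_circle : ∀ z : ℂ, ‖z‖ = 1 → aeval z p ≠ 0 := fun z hz h => (hroots z h).ne hz
  rcases eq_or_ne q 0 with rfl | hq
  · refine Set.finite_empty.subset ?_
    rintro α ⟨z, hz, hα⟩
    exact hp_circle z hz (by simpa using hα)
  let R := p * reflect p.natDegree q - reflect p.natDegree p * q
  refine ((R.rootSet ℂ).toFinite.image fun z => (-(aeval z p / aeval z q)).re).subset ?_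
  rintro α ⟨z, hz, hα⟩
  have hqz : aeval z q ≠ 0 := fun h => hp_circle z hz (by simpa [h] using hα)
  refine ⟨z, mem_rootSet.2 ⟨mul_reflect_sub_reflect_mul_ne_zero hroots hq hdeg,
    aeval_mul_reflect_sub_reflect_mul_eq_zero le_rfl (natDegree_le_natDegree hdeg.le) hz hα⟩, ?_⟩
  change (-(aeval z p / aeval z q)).re = α
  rw [show aeval z p = -α * aeval z q by linear_combination hα, neg_mul, neg_div, neg_neg,
    mul_div_cancel_right₀ _ hqz, Complex.ofReal_re]

theorem stmt3 (p q : ℝ[X]) (hp : p.Monic)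
    (hroots : ∀ z : ℂ, (p.map (algebraMap ℝ ℂ)).IsRoot z → ‖z‖ < 1)
    (hdeg : q.degree < p.degree) :
    {α : ℝ | ∃ z : ℂ, ‖z‖ = 1 ∧
      Polynomial.aeval z p + (α : ℂ) * Polynomial.aeval z q = 0}.Finite :=
  stmt3_general p q hroots hdeg
end

section
/- The function α ↦ spr(p + α·q) tends to +∞ as α → +∞ and also as α → −∞. -/
/-!
Vieta's formulas bound every coefficient of a monic polynomial of degree `n` by
`C(n, i) · spr ^ (n - i)`. The coefficient of `p + α q` in degree `deg q` is
`p_{deg q} + α · lc q`, which is unbounded as `|α| → ∞`, while the degree stays `deg p`;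
hence the spectral radius must blow up.
-/

open Polynomial Filter Bornology

noncomputable def spr (r : ℂ[X]) : ℝ := sSup ((fun z : ℂ => ‖z‖) '' {z : ℂ | r.IsRoot z})

noncomputable def sprR (r : ℝ[X]) : ℝ := spr (r.map (algebraMap ℝ ℂ))

lemma spr_nonneg (r : ℂ[X]) : 0 ≤ spr r :=
  Real.sSup_nonneg <| by
    rintro _ ⟨z, -, rfl⟩
    exact norm_nonneg z

lemma norm_le_spr {r : ℂ[X]} (hr : r ≠ 0) {z : ℂ} (hz : r.IsRoot z) : ‖z‖ ≤ spr r :=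
  le_csSup ((finite_setOfPred_isRoot hr).image _).bddAbove ⟨z, hz, rfl⟩

lemma abs_coeff_le_sprR {r : ℝ[X]} (hr : r.Monic) (i : ℕ) :
    |r.coeff i| ≤ sprR r ^ (r.natDegree - i) * r.natDegree.choose i := by
  have hne : r.map (algebraMap ℝ ℂ) ≠ 0 := (hr.map _).ne_zero
  have := coeff_le_of_roots_le i hr (IsAlgClosed.splits _)
    fun z hz => norm_le_spr hne ((mem_roots hne).1 hz)
  simpa [sprR] using this

lemma tendsto_atTop_of_abs_le_pow_mul {ι : Type*} {l : Filter ι} {f c : ι → ℝ} {m : ℕ} {K : ℝ}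
    (hf : ∀ a, 0 ≤ f a) (hK : 0 ≤ K) (hbound : ∀ a, |c a| ≤ f a ^ m * K)
    (hc : Tendsto (fun a => |c a|) l atTop) : Tendsto f l atTop := by
  refine tendsto_atTop.2 fun b => ?_
  filter_upwards [hc.eventually_gt_atTop (max b 0 ^ m * K)] with a ha
  have hpow : max b 0 ^ m < f a ^ m :=
    lt_of_mul_lt_mul_right (ha.trans_le (hbound a)) hK
  exact (le_max_left b 0).trans (lt_of_pow_lt_pow_left₀ m (hf a) hpow).le

lemma tendsto_sprR_atTop_of_tendsto_abs_coeff {ι : Type*} {l : Filter ι} {r : ι → ℝ[X]}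
    {n i : ℕ} (hmonic : ∀ a, (r a).Monic) (hdeg : ∀ a, (r a).natDegree = n)
    (hcoeff : Tendsto (fun a => |(r a).coeff i|) l atTop) :
    Tendsto (fun a => sprR (r a)) l atTop :=
  tendsto_atTop_of_abs_le_pow_mul (fun _ => spr_nonneg _) (Nat.cast_nonneg (n.choose i))
    (fun a => hdeg a ▸ abs_coeff_le_sprR (hmonic a) i) hcoeff

lemma tendsto_abs_const_add_mul_const_cobounded {a b : ℝ} (hb : b ≠ 0) :
    Tendsto (fun α : ℝ => |a + α * b|) (cobounded ℝ) atTop :=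
  tendsto_norm_cobounded_atTop.comp
    ((tendsto_const_add_cobounded a).comp (tendsto_mul_right_cobounded hb))

lemma tendsto_sprR_add_C_mul_cobounded {p q : ℝ[X]} (hp : p.Monic) (hq : q ≠ 0)
    (hdeg : q.degree < p.degree) :
    Tendsto (fun α : ℝ => sprR (p + C α * q)) (cobounded ℝ) atTop := by
  have hdegC (α : ℝ) : (C α * q).degree < p.degree :=
    smul_eq_C_mul α (p := q) ▸ (degree_smul_le α q).trans_lt hdeg
  refine tendsto_sprR_atTop_of_tendsto_abs_coeff (n := p.natDegree) (i := q.natDegree)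
    (fun α => hp.add_of_left (hdegC α))
    (fun α => natDegree_add_eq_left_of_degree_lt (hdegC α)) ?_
  simpa only [coeff_add, coeff_C_mul, coeff_natDegree] using
    tendsto_abs_const_add_mul_const_cobounded (a := p.coeff q.natDegree)
      (leadingCoeff_ne_zero.2 hq)

theorem stmt5_general (p q : ℝ[X]) (hp : p.Monic)
    (hq : q ≠ 0) (hdeg : q.degree < p.degree) :
    Filter.Tendsto (fun α : ℝ => sprR (p + C α * q)) Filter.atTop Filter.atTop ∧
    Filter.Tendsto (fun α : ℝ => sprR (p + C α * q)) Filter.atBot Filter.atTop :=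
  have h := tendsto_sprR_add_C_mul_cobounded hp hq hdeg
  ⟨h.mono_left IsOrderBornology.atTop_le_cobounded,
    h.mono_left IsOrderBornology.atBot_le_cobounded⟩

theorem stmt5 (p q : ℝ[X]) (hp : p.Monic)
    (hroots : ∀ z : ℂ, (p.map (algebraMap ℝ ℂ)).IsRoot z → ‖z‖ < 1)
    (hq : q ≠ 0) (hdeg : q.degree < p.degree) :
    Filter.Tendsto (fun α : ℝ => sprR (p + C α * q)) Filter.atTop Filter.atTop ∧
    Filter.Tendsto (fun α : ℝ => sprR (p + C α * q)) Filter.atBot Filter.atTop :=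
  stmt5_general p q hp hq hdeg
end

section
/- Suppose d ∈ ℕ, α ∈ ℝ, and θ ∈ (0, π] satisfy p_{d,α}(e^{iθ}) = 0, and write D(e^{iθ})/N(e^{iθ}) = a + b·i with a, b ∈ ℝ (this quotient is well defined since N has no roots on the unit circle). Then b·(cos(dθ) − cos((d+1)θ)) + a·(sin(dθ) − sin((d+1)θ)) = 0, and α·(cos(dθ) − cos((d+1)θ)) = a. -/
open Polynomial

noncomputable def pda (N D : ℝ[X]) (d : ℕ) (α : ℝ) : ℝ[X] :=
  X ^ (d + 1) * D - C α * ((X - 1) * N)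

/-!
At a root `z` of `p_{d,α}` where `N` does not vanish, dividing by `z^{d+1} N(z)` gives
`D(z)/N(z) = α (z^{-d} - z^{-(d+1)})`. On the unit circle `z^{-n} = cos nθ - i sin nθ`, so
`a = α (cos dθ - cos (d+1)θ)` and `b = α (sin (d+1)θ - sin dθ)`, from which both identities follow.
-/

lemma aeval_pda {A : Type*} [CommRing A] [Algebra ℝ A] (N D : ℝ[X]) (d : ℕ) (α : ℝ) (x : A) :
    aeval x (pda N D d α) =
      x ^ (d + 1) * aeval x D - algebraMap ℝ A α * ((x - 1) * aeval x N) := by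
  simp [pda]

lemma aeval_div_aeval_eq_of_aeval_pda_eq_zero {K : Type*} [Field K] [Algebra ℝ K]
    {N D : ℝ[X]} {d : ℕ} {α : ℝ} {x : K} (hx : x ≠ 0) (hN : aeval x N ≠ 0)
    (hroot : aeval x (pda N D d α) = 0) :
    aeval x D / aeval x N = algebraMap ℝ K α * (x⁻¹ ^ d - x⁻¹ ^ (d + 1)) := by
  have hpow : x⁻¹ ^ d - x⁻¹ ^ (d + 1) = (x - 1) / x ^ (d + 1) := by
    rw [inv_pow, inv_pow, pow_succ]
    field_simp
  rw [aeval_pda] at hroot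
  rw [hpow, div_eq_iff hN]
  field_simp
  linear_combination hroot

lemma Complex.exp_ofReal_mul_I_inv_pow (θ : ℝ) (n : ℕ) :
    (exp (θ * I))⁻¹ ^ n = exp ((-(n * θ) : ℝ) * I) := by
  rw [← exp_neg, ← exp_nat_mul]
  push_cast
  ring_nf

lemma Complex.exp_ofReal_mul_I_inv_pow_re (θ : ℝ) (n : ℕ) :
    ((exp (θ * I))⁻¹ ^ n).re = Real.cos (n * θ) := by
  rw [exp_ofReal_mul_I_inv_pow, exp_ofReal_mul_I_re, Real.cos_neg]

lemma Complex.exp_ofReal_mul_I_inv_pow_im (θ : ℝ) (n : ℕ) :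
    ((exp (θ * I))⁻¹ ^ n).im = -Real.sin (n * θ) := by
  rw [exp_ofReal_mul_I_inv_pow, exp_ofReal_mul_I_im, Real.sin_neg]

theorem stmt15_general (N D : ℝ[X])
    (hNcirc : ∀ z : ℂ, ‖z‖ = 1 → Polynomial.aeval z N ≠ 0)
    (d : ℕ) (α : ℝ) (θ : ℝ)
    (hroot : Polynomial.aeval (Complex.exp (θ * Complex.I)) (pda N D d α) = 0)
    (a b : ℝ)
    (hab : Polynomial.aeval (Complex.exp (θ * Complex.I)) D /
        Polynomial.aeval (Complex.exp (θ * Complex.I)) N = (a : ℂ) + (b : ℂ) * Complex.I) :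
    b * (Real.cos (d * θ) - Real.cos ((d + 1) * θ)) +
        a * (Real.sin (d * θ) - Real.sin ((d + 1) * θ)) = 0 ∧
    α * (Real.cos (d * θ) - Real.cos ((d + 1) * θ)) = a := by
  have hz : ‖Complex.exp (θ * Complex.I)‖ = 1 := Complex.norm_exp_ofReal_mul_I θ
  have hquot := aeval_div_aeval_eq_of_aeval_pda_eq_zero (Complex.exp_ne_zero _)
    (hNcirc _ hz) hroot
  rw [hab, Complex.coe_algebraMap] at hquot
  have ha : a = α * (Real.cos (d * θ) - Real.cos ((d + 1) * θ)) := by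
    have := congrArg Complex.re hquot
    simp only [Complex.re_ofReal_mul, Complex.sub_re, Complex.exp_ofReal_mul_I_inv_pow_re] at this
    simpa using this
  have hb : b = α * (Real.sin ((d + 1) * θ) - Real.sin (d * θ)) := by
    have := congrArg Complex.im hquot
    simp only [Complex.im_ofReal_mul, Complex.sub_im, Complex.exp_ofReal_mul_I_inv_pow_im] at this
    simpa [neg_add_eq_sub] using this
  constructor
  · rw [ha, hb]
    ring
  · exact ha.symm

theorem stmt15 (N D : ℝ[X]) (hco : IsCoprime N D) (hD : D.Monic)
    (hdeg : N.degree < D.degree)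
    (hDroots : ∀ z : ℂ, Polynomial.aeval z D = 0 → ‖z‖ < 1)
    (hN : N ≠ 0)
    (hNcirc : ∀ z : ℂ, ‖z‖ = 1 → Polynomial.aeval z N ≠ 0)
    (d : ℕ) (α : ℝ) (θ : ℝ) (hθ : θ ∈ Set.Ioc 0 Real.pi)
    (hroot : Polynomial.aeval (Complex.exp (θ * Complex.I)) (pda N D d α) = 0)
    (a b : ℝ)
    (hab : Polynomial.aeval (Complex.exp (θ * Complex.I)) D /
        Polynomial.aeval (Complex.exp (θ * Complex.I)) N = (a : ℂ) + (b : ℂ) * Complex.I) :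
    b * (Real.cos (d * θ) - Real.cos ((d + 1) * θ)) +
        a * (Real.sin (d * θ) - Real.sin ((d + 1) * θ)) = 0 ∧
    α * (Real.cos (d * θ) - Real.cos ((d + 1) * θ)) = a :=
  stmt15_general N D hNcirc d α θ hroot a b hab
end
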